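/- Let (x̄,σ̄) ∈ ℝⁿ × int(dom V*) be a critical point of Ξ such that A(σ̄) is positive semidefinite. Then σ̄ ∈ S_col⁺ and f(x̄) = inf_{x ∈ dom f} f(x) = Ξ(x̄,σ̄) = sup_{σ ∈ S_col⁺} D(σ) = D(σ̄); moreover, if A(σ̄) is positive definite, then x̄ is the unique global minimizer of f on dom f. -/

import Mathlib

open Matrix Set

noncomputable section

/-- The quadratic function `x ↦ ½⟨x, A x⟩ − ⟨b, x⟩ + c`. -/
def qf {n : ℕ} (A : Matrix (Fin n) (Fin n) ℝ) (b : Fin n → ℝ) (c : ℝ) (x : Fin n → ℝ) : ℝ :=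
  (1 / 2 : ℝ) * (x ⬝ᵥ A.mulVec x) - b ⬝ᵥ x + c

/-- `A(σ) = A₀ + Σ σ_k A_k`. -/
def Amat {n m : ℕ} (A0 : Matrix (Fin n) (Fin n) ℝ) (A : Fin m → Matrix (Fin n) (Fin n) ℝ)
    (σ : Fin m → ℝ) : Matrix (Fin n) (Fin n) ℝ :=
  A0 + ∑ k, σ k • A k

/-- `b(σ) = b₀ + Σ σ_k b_k`. -/
def bvec {n m : ℕ} (b0 : Fin n → ℝ) (b : Fin m → Fin n → ℝ) (σ : Fin m → ℝ) : Fin n → ℝ :=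
  b0 + ∑ k, σ k • b k

/-- `q(x) = (q₁(x), …, q_m(x))`. -/
def qvec {n m : ℕ} (A : Fin m → Matrix (Fin n) (Fin n) ℝ) (b : Fin m → Fin n → ℝ)
    (c : Fin m → ℝ) (x : Fin n → ℝ) : Fin m → ℝ :=
  fun i => qf (A i) (b i) (c i) x

/-- Subdifferential of an (extended-real-valued) convex function represented by its
finite part `V` and its effective domain `dV`; it is empty outside `dV`. -/
def subdiff {m : ℕ} (V : (Fin m → ℝ) → ℝ) (dV : Set (Fin m → ℝ)) (y : Fin m → ℝ) :
    Set (Fin m → ℝ) :=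
  {σ | y ∈ dV ∧ ∀ y' ∈ dV, (y' - y) ⬝ᵥ σ ≤ V y' - V y}

/-- `V ∈ Γ(ℝᵐ)`: proper, convex and lower semicontinuous (closed epigraph), where the
extended-real-valued function is represented by its finite part `V` on its domain `dV`. -/
def properLscConvex {m : ℕ} (V : (Fin m → ℝ) → ℝ) (dV : Set (Fin m → ℝ)) : Prop :=
  dV.Nonempty ∧ ConvexOn ℝ dV V ∧
    IsClosed {p : (Fin m → ℝ) × ℝ | p.1 ∈ dV ∧ V p.1 ≤ p.2}

/-- `(Vs, dVs)` is the Fenchel conjugate of `(V, dV)`: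
`dVs` is the set where the supremum is finite and `Vs` its value there. -/
def isConjugate {m : ℕ} (V : (Fin m → ℝ) → ℝ) (dV : Set (Fin m → ℝ))
    (Vs : (Fin m → ℝ) → ℝ) (dVs : Set (Fin m → ℝ)) : Prop :=
  dVs = {σ | BddAbove ((fun y => y ⬝ᵥ σ - V y) '' dV)} ∧
    ∀ σ ∈ dVs, Vs σ = sSup ((fun y => y ⬝ᵥ σ - V y) '' dV)

/-- The continuous linear functional `v ↦ ⟨g, v⟩`. -/
def dotCLM {k : ℕ} (g : Fin k → ℝ) : (Fin k → ℝ) →L[ℝ] ℝ :=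
  LinearMap.toContinuousLinearMap
    { toFun := fun v => g ⬝ᵥ v
      map_add' := fun u v => by simp [dotProduct_add]
      map_smul' := fun t v => by simp [dotProduct_smul, smul_eq_mul] }

/-- The continuous linear map `v ↦ M v`. -/
def matCLM {k l : ℕ} (M : Matrix (Fin l) (Fin k) ℝ) : (Fin k → ℝ) →L[ℝ] (Fin l → ℝ) :=
  LinearMap.toContinuousLinearMap M.mulVecLin

/-- `V ∈ Γ_sc(ℝᵐ)`: a proper lsc convex function of Legendre type, i.e. essentially smooth
(differentiable on the nonempty interior of its domain, with gradient `gV`, and with empty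
subdifferential outside this interior) and essentially strictly convex. -/
def LegendreType {m : ℕ} (V : (Fin m → ℝ) → ℝ) (dV : Set (Fin m → ℝ))
    (gV : (Fin m → ℝ) → (Fin m → ℝ)) : Prop :=
  (interior dV).Nonempty ∧
  (∀ y ∈ interior dV, HasFDerivAt V (dotCLM (gV y)) y) ∧
  (∀ y, y ∉ interior dV → subdiff V dV y = ∅) ∧
  StrictConvexOn ℝ (interior dV) V

/-!
At the critical point, `q(x̄) = ∇V*(σ̄)` is a subgradient of the convex function `V*`; separating
`(q(x̄), ⟨q(x̄), σ̄⟩ − V*(σ̄))` from the closed epigraph of `V` shows that this forces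
`q(x̄) ∈ dom V` with equality in Fenchel–Young, i.e. `f(x̄) = Ξ(x̄, σ̄)`.
For all `x ∈ dom f` and `σ ∈ dom V*`, Fenchel–Young gives `Ξ(x, σ) ≤ f(x)`, while
`Ξ(·, σ) = ½⟨x, A(σ)x⟩ − ⟨b(σ), x⟩ + ⟨c, σ⟩ − V*(σ)` is minimised (uniquely when `A(σ) ≻ 0`) at
every solution of `A(σ)x = b(σ)` when `A(σ) ⪰ 0`. Chaining these inequalities gives the global
minimality of `x̄` and `D(σ) ≤ f(x̄) = D(σ̄)` on `S_col⁺`.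
-/

theorem ConvexOn.apply_sub_le_of_hasFDerivAt {E : Type*} [NormedAddCommGroup E] [NormedSpace ℝ E]
    {s : Set E} {f : E → ℝ} {f' : E →L[ℝ] ℝ} {x y : E} (hf : ConvexOn ℝ s f) (hx : x ∈ s)
    (hy : y ∈ s) (hd : HasFDerivAt f f' x) : f' (y - x) ≤ f y - f x := by
  set ℓ : ℝ →ᵃ[ℝ] E := AffineMap.lineMap x y
  have hline : ConvexOn ℝ (Set.Icc 0 1) (f ∘ ℓ) :=
    (hf.comp_affineMap ℓ).subset (fun t ht => hf.1.lineMap_mem hx hy ht) (convex_Icc 0 1)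
  have hderiv : HasDerivAt (f ∘ ℓ) (f' (y - x)) 0 :=
    hd.comp_hasDerivAt_of_eq 0 AffineMap.hasDerivAt_lineMap (by simp [ℓ])
  simpa [slope_def_field, ℓ] using
    hline.le_slope_of_hasDerivAt (by simp) (by simp) zero_lt_one hderiv

theorem ContinuousLinearMap.exists_apply_eq_dotProduct_add_mul {m : ℕ}
    (f : (Fin m → ℝ) × ℝ →L[ℝ] ℝ) : ∃ (σ : Fin m → ℝ) (s : ℝ), ∀ y r, f (y, r) = y ⬝ᵥ σ + r * s := by
  refine ⟨fun i => f (Pi.single i 1, 0), f (0, 1), fun y r => ?_⟩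
  have hsplit : (y, r) = (∑ i, y i • (Pi.single i 1, 0) : (Fin m → ℝ) × ℝ) + r • (0, 1) := by
    ext <;> simp [Prod.fst_sum, Prod.snd_sum, Pi.single_apply]
  rw [hsplit, map_add, map_sum]
  simp only [map_smul, smul_eq_mul, dotProduct]

theorem qf_add_qvec_dotProduct {n m : ℕ} (A0 : Matrix (Fin n) (Fin n) ℝ)
    (A : Fin m → Matrix (Fin n) (Fin n) ℝ) (b0 : Fin n → ℝ) (b : Fin m → Fin n → ℝ)
    (c σ : Fin m → ℝ) (x : Fin n → ℝ) :
    qf A0 b0 0 x + qvec A b c x ⬝ᵥ σ = qf (Amat A0 A σ) (bvec b0 b σ) (c ⬝ᵥ σ) x := by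
  have hq : qvec A b c x ⬝ᵥ σ =
      ∑ k, (1 / 2 * (σ k * (x ⬝ᵥ A k *ᵥ x)) - σ k * (b k ⬝ᵥ x) + c k * σ k) :=
    Finset.sum_congr rfl fun k _ => by simp only [qvec, qf]; ring
  have hc : c ⬝ᵥ σ = ∑ k, c k * σ k := rfl
  rw [hq, hc, Finset.sum_add_distrib, Finset.sum_sub_distrib, ← Finset.mul_sum]
  simp only [qf, Amat, bvec, add_mulVec, sum_mulVec, dotProduct_add, add_dotProduct, dotProduct_sum,
    sum_dotProduct, smul_mulVec, dotProduct_smul, smul_dotProduct, smul_eq_mul]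
  ring

theorem qf_sub_qf_of_mulVec_eq {n : ℕ} {S : Matrix (Fin n) (Fin n) ℝ} (hS : S.IsHermitian)
    {v x₀ : Fin n → ℝ} (hx₀ : S *ᵥ x₀ = v) (a : ℝ) (x : Fin n → ℝ) :
    qf S v a x - qf S v a x₀ = 1 / 2 * ((x - x₀) ⬝ᵥ S *ᵥ (x - x₀)) := by
  have hsymm : x₀ ⬝ᵥ S *ᵥ x = v ⬝ᵥ x := by
    rw [dotProduct_mulVec, ← mulVec_transpose, ← conjTranspose_eq_transpose_of_trivial, hS.eq,
      hx₀, dotProduct_comm]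
  simp only [qf, mulVec_sub, dotProduct_sub, sub_dotProduct, hsymm, hx₀, dotProduct_comm x₀ v,
    dotProduct_comm x v]
  ring

theorem qf_le_of_mulVec_eq {n : ℕ} {S : Matrix (Fin n) (Fin n) ℝ} (hS : S.PosSemidef)
    {v x₀ : Fin n → ℝ} (hx₀ : S *ᵥ x₀ = v) (a : ℝ) (x : Fin n → ℝ) :
    qf S v a x₀ ≤ qf S v a x := by
  have hdiff := qf_sub_qf_of_mulVec_eq hS.1 hx₀ a x
  have hnonneg := hS.dotProduct_mulVec_nonneg (x - x₀)
  rw [star_trivial] at hnonneg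
  linarith

theorem qf_lt_of_mulVec_eq {n : ℕ} {S : Matrix (Fin n) (Fin n) ℝ} (hS : S.PosDef)
    {v x₀ : Fin n → ℝ} (hx₀ : S *ᵥ x₀ = v) (a : ℝ) {x : Fin n → ℝ} (hx : x ≠ x₀) :
    qf S v a x₀ < qf S v a x := by
  have hdiff := qf_sub_qf_of_mulVec_eq hS.1 hx₀ a x
  have hpos := hS.dotProduct_mulVec_pos (sub_ne_zero.mpr hx)
  rw [star_trivial] at hpos
  linarith

namespace isConjugate

variable {m : ℕ} {V Vs : (Fin m → ℝ) → ℝ} {dV dVs : Set (Fin m → ℝ)}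

theorem dotProduct_sub_le (hconj : isConjugate V dV Vs dVs) {y σ : Fin m → ℝ} (hy : y ∈ dV)
    (hσ : σ ∈ dVs) : y ⬝ᵥ σ - V y ≤ Vs σ := by
  rw [hconj.2 σ hσ]
  exact le_csSup (hconj.1.subset hσ) ⟨y, hy, rfl⟩

theorem mem_and_le_of_forall_le (hconj : isConjugate V dV Vs dVs) (hdV : dV.Nonempty)
    {σ : Fin m → ℝ} {M : ℝ} (h : ∀ y ∈ dV, y ⬝ᵥ σ - V y ≤ M) : σ ∈ dVs ∧ Vs σ ≤ M := by
  have hσ : σ ∈ dVs := hconj.1.symm.subset ⟨M, Set.forall_mem_image.2 h⟩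
  refine ⟨hσ, ?_⟩
  rw [hconj.2 σ hσ]
  exact csSup_le (hdV.image _) (Set.forall_mem_image.2 h)

theorem convexOn (hconj : isConjugate V dV Vs dVs) (hdV : dV.Nonempty) : ConvexOn ℝ dVs Vs := by
  have hcomb : ∀ σ₁ ∈ dVs, ∀ σ₂ ∈ dVs, ∀ ⦃a b : ℝ⦄, 0 ≤ a → 0 ≤ b → a + b = 1 →
      a • σ₁ + b • σ₂ ∈ dVs ∧ Vs (a • σ₁ + b • σ₂) ≤ a • Vs σ₁ + b • Vs σ₂ := by
    intro σ₁ hσ₁ σ₂ hσ₂ a b ha hb hab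
    refine hconj.mem_and_le_of_forall_le hdV fun y hy => ?_
    have h₁ := mul_le_mul_of_nonneg_left (hconj.dotProduct_sub_le hy hσ₁) ha
    have h₂ := mul_le_mul_of_nonneg_left (hconj.dotProduct_sub_le hy hσ₂) hb
    have hV : V y = a * V y + b * V y := by rw [← add_mul, hab, one_mul]
    simp only [dotProduct_add, dotProduct_smul, smul_eq_mul]
    linarith
  exact ⟨fun σ₁ hσ₁ σ₂ hσ₂ a b ha hb hab => (hcomb σ₁ hσ₁ σ₂ hσ₂ ha hb hab).1,
    fun σ₁ hσ₁ σ₂ hσ₂ a b ha hb hab => (hcomb σ₁ hσ₁ σ₂ hσ₂ ha hb hab).2⟩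

theorem mem_and_le_of_subgradient (hV : properLscConvex V dV) (hconj : isConjugate V dV Vs dVs)
    {σ₀ y₀ : Fin m → ℝ} (hσ₀ : σ₀ ∈ dVs)
    (hsub : ∀ σ ∈ dVs, y₀ ⬝ᵥ (σ - σ₀) ≤ Vs σ - Vs σ₀) :
    y₀ ∈ dV ∧ V y₀ ≤ y₀ ⬝ᵥ σ₀ - Vs σ₀ := by
  by_contra hnot
  obtain ⟨ℓ, u, hℓ_epi, hℓ_pt⟩ := geometric_hahn_banach_closed_point hV.2.1.convex_epigraph hV.2.2
    (show (y₀, y₀ ⬝ᵥ σ₀ - Vs σ₀) ∉ {p | p.1 ∈ dV ∧ V p.1 ≤ p.2} from hnot)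
  obtain ⟨τ, s, hℓ⟩ := ℓ.exists_apply_eq_dotProduct_add_mul
  have hsep : ∀ y ∈ dV, ∀ r, V y ≤ r → y ⬝ᵥ τ + r * s < u := fun y hy r hr =>
    hℓ y r ▸ hℓ_epi (y, r) ⟨hy, hr⟩
  have hs : s ≤ 0 := by
    by_contra! hs
    obtain ⟨y, hy⟩ := hV.1
    have hlt := hsep y hy (max (V y) ((u - y ⬝ᵥ τ) / s)) (le_max_left _ _)
    have hge := (div_le_iff₀ hs).1 (le_max_right (V y) ((u - y ⬝ᵥ τ) / s))
    linarith
  -- Adding the Fenchel–Young inequality at `σ₀` makes the separating hyperplane non-vertical.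
  set k : ℝ := 1 - s
  have hk : 0 < k := by linarith
  obtain ⟨hσ, hVsσ⟩ : k⁻¹ • (τ + σ₀) ∈ dVs ∧ Vs (k⁻¹ • (τ + σ₀)) ≤ k⁻¹ * (u + Vs σ₀) := by
    refine hconj.mem_and_le_of_forall_le hV.1 fun y hy => ?_
    have h₁ := hsep y hy (V y) le_rfl
    have h₂ := hconj.dotProduct_sub_le hy hσ₀
    rw [dotProduct_smul, dotProduct_add, smul_eq_mul, ← mul_le_mul_iff_of_pos_left hk]
    field_simp
    linarith
  have h := hsub _ hσ
  rw [dotProduct_sub, dotProduct_smul, dotProduct_add, smul_eq_mul] at h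
  have h' := mul_le_mul_of_nonneg_left (h.trans (sub_le_sub_right hVsσ _)) hk.le
  field_simp at h'
  have hpt := hℓ y₀ _ ▸ hℓ_pt
  simp only [k] at h'
  linarith

end isConjugate

theorem statement5_general {n m : ℕ}
    (A0 : Matrix (Fin n) (Fin n) ℝ) (A : Fin m → Matrix (Fin n) (Fin n) ℝ)
    (b0 : Fin n → ℝ) (b : Fin m → Fin n → ℝ) (c : Fin m → ℝ)
    (V Vs : (Fin m → ℝ) → ℝ) (dV dVs : Set (Fin m → ℝ))
    (gVs : (Fin m → ℝ) → (Fin m → ℝ))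
    (hV : properLscConvex V dV)
    (hconj : isConjugate V dV Vs dVs)
    (hgVs : ∀ σ ∈ interior dVs, HasFDerivAt Vs (dotCLM (gVs σ)) σ)
    (D : (Fin m → ℝ) → ℝ)
    (hD : ∀ σ ∈ dVs, bvec b0 b σ ∈ Set.range (Amat A0 A σ).mulVec →
      ∀ x, Amat A0 A σ *ᵥ x = bvec b0 b σ →
        D σ = qf A0 b0 0 x + qvec A b c x ⬝ᵥ σ - Vs σ)
    (xb : Fin n → ℝ) (σb : Fin m → ℝ) (hσint : σb ∈ interior dVs)
    (hcrit1 : Amat A0 A σb *ᵥ xb = bvec b0 b σb)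
    (hcrit2 : qvec A b c xb = gVs σb)
    (hpsd : (Amat A0 A σb).PosSemidef) :
    σb ∈ dVs ∧ bvec b0 b σb ∈ Set.range (Amat A0 A σb).mulVec ∧
    qvec A b c xb ∈ dV ∧
    (∀ x, qvec A b c x ∈ dV →
      qf A0 b0 0 xb + V (qvec A b c xb) ≤ qf A0 b0 0 x + V (qvec A b c x)) ∧
    qf A0 b0 0 xb + V (qvec A b c xb) =
      qf A0 b0 0 xb + qvec A b c xb ⬝ᵥ σb - Vs σb ∧
    qf A0 b0 0 xb + qvec A b c xb ⬝ᵥ σb - Vs σb = D σb ∧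
    (∀ σ, σ ∈ dVs → bvec b0 b σ ∈ Set.range (Amat A0 A σ).mulVec →
      (Amat A0 A σ).PosSemidef → D σ ≤ D σb) ∧
    ((Amat A0 A σb).PosDef →
      ∀ x, qvec A b c x ∈ dV → x ≠ xb →
        qf A0 b0 0 xb + V (qvec A b c xb) < qf A0 b0 0 x + V (qvec A b c x)) := by
  have hσb : σb ∈ dVs := interior_subset hσint
  have hsub : ∀ σ ∈ dVs, qvec A b c xb ⬝ᵥ (σ - σb) ≤ Vs σ - Vs σb := fun σ hσ => by
    simpa [hcrit2, dotCLM] using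
      (hconj.convexOn hV.1).apply_sub_le_of_hasFDerivAt hσb hσ (hgVs σb hσint)
  obtain ⟨hqdV, hVq⟩ := hconj.mem_and_le_of_subgradient hV hσb hsub
  have hΞ_min : ∀ σ x₀ x, (Amat A0 A σ).PosSemidef → Amat A0 A σ *ᵥ x₀ = bvec b0 b σ →
      qf A0 b0 0 x₀ + qvec A b c x₀ ⬝ᵥ σ ≤ qf A0 b0 0 x + qvec A b c x ⬝ᵥ σ := by
    intro σ x₀ x hS hx₀
    rw [qf_add_qvec_dotProduct, qf_add_qvec_dotProduct]
    exact qf_le_of_mulVec_eq hS hx₀ _ x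
  have hDb := hD σb hσb ⟨xb, hcrit1⟩ xb hcrit1
  refine ⟨hσb, ⟨xb, hcrit1⟩, hqdV, fun x hx => ?_, by linarith [hconj.dotProduct_sub_le hqdV hσb], hDb.symm,
    fun σ hσ ⟨x₀, hx₀⟩ hS => ?_, fun hpd x hx hne => ?_⟩
  · linarith [hΞ_min σb xb x hpsd hcrit1, hconj.dotProduct_sub_le hx hσb]
  · linarith [hD σ hσ ⟨x₀, hx₀⟩ x₀ hx₀, hΞ_min σ x₀ xb hS hx₀, hconj.dotProduct_sub_le hqdV hσ]
  · have hΞ_lt : qf A0 b0 0 xb + qvec A b c xb ⬝ᵥ σb < qf A0 b0 0 x + qvec A b c x ⬝ᵥ σb := by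
      rw [qf_add_qvec_dotProduct, qf_add_qvec_dotProduct]
      exact qf_lt_of_mulVec_eq hpd hcrit1 _ hne
    linarith [hconj.dotProduct_sub_le hx hσb]

/-- Let `V` be of Legendre type and `(x̄,σ̄) ∈ ℝⁿ × int(dom V*)` a critical
point of `Ξ` with `A(σ̄) ⪰ 0`. Then `σ̄ ∈ S_col⁺` and
`f(x̄) = inf_{dom f} f = Ξ(x̄,σ̄) = sup_{S_col⁺} D = D(σ̄)`; if `A(σ̄) ≻ 0`, `x̄` is the
unique global minimizer of `f` on `dom f`. -/
theorem statement5 {n m : ℕ}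
    (A0 : Matrix (Fin n) (Fin n) ℝ) (A : Fin m → Matrix (Fin n) (Fin n) ℝ)
    (b0 : Fin n → ℝ) (b : Fin m → Fin n → ℝ) (c : Fin m → ℝ)
    (hA0 : A0.IsSymm) (hA : ∀ i, (A i).IsSymm)
    (V Vs : (Fin m → ℝ) → ℝ) (dV dVs : Set (Fin m → ℝ))
    (gV gVs : (Fin m → ℝ) → (Fin m → ℝ))
    (hV : properLscConvex V dV) (hLeg : LegendreType V dV gV)
    (hconj : isConjugate V dV Vs dVs)
    (hgVs : ∀ σ ∈ interior dVs, HasFDerivAt Vs (dotCLM (gVs σ)) σ)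
    (D : (Fin m → ℝ) → ℝ)
    (hD : ∀ σ ∈ dVs, bvec b0 b σ ∈ Set.range (Amat A0 A σ).mulVec →
      ∀ x, Amat A0 A σ *ᵥ x = bvec b0 b σ →
        D σ = qf A0 b0 0 x + qvec A b c x ⬝ᵥ σ - Vs σ)
    (xb : Fin n → ℝ) (σb : Fin m → ℝ) (hσint : σb ∈ interior dVs)
    (hcrit1 : Amat A0 A σb *ᵥ xb = bvec b0 b σb)
    (hcrit2 : qvec A b c xb = gVs σb)
    (hpsd : (Amat A0 A σb).PosSemidef) :
    σb ∈ dVs ∧ bvec b0 b σb ∈ Set.range (Amat A0 A σb).mulVec ∧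
    qvec A b c xb ∈ dV ∧
    (∀ x, qvec A b c x ∈ dV →
      qf A0 b0 0 xb + V (qvec A b c xb) ≤ qf A0 b0 0 x + V (qvec A b c x)) ∧
    qf A0 b0 0 xb + V (qvec A b c xb) =
      qf A0 b0 0 xb + qvec A b c xb ⬝ᵥ σb - Vs σb ∧
    qf A0 b0 0 xb + qvec A b c xb ⬝ᵥ σb - Vs σb = D σb ∧
    (∀ σ, σ ∈ dVs → bvec b0 b σ ∈ Set.range (Amat A0 A σ).mulVec →
      (Amat A0 A σ).PosSemidef → D σ ≤ D σb) ∧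
    ((Amat A0 A σb).PosDef →
      ∀ x, qvec A b c x ∈ dV → x ≠ xb →
        qf A0 b0 0 xb + V (qvec A b c xb) < qf A0 b0 0 x + V (qvec A b c x)) :=
  statement5_general A0 A b0 b c V Vs dV dVs gVs hV hconj hgVs D hD xb σb hσint hcrit1 hcrit2 hpsd
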